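/- arXiv:1301.0896 — 2 statements merged into one kernel-verified Lean document; each statement's English description precedes it below -/
import Mathlib

section
/- With notation of the correspondence between systems of 1-cochains and matrix-valued maps: a full system (c_{ij}), 1 ≤ i ≤ j ≤ n, corresponds to a map γ: G → U_{n+1}(R), and γ is a group homomorphism if and only if (c_{ij}) is a defining system with additionally ∂c_{1n} = c̃_{1n}. -/
/-!
Above the diagonal, entry `(i, j)` of `γ(σ) γ(τ)` is `(-1)^(j-i)` times
`c_{i+1,j}(σ) + c_{i+1,j}(τ) + ∑_r c_{i+1,r}(σ) c_{r+1,j}(τ)`, because the signs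
`(-1)^(k-i) (-1)^(j-k)` of the middle terms all equal `(-1)^(j-i)`. Since that sign is a unit,
`γ(στ) = γ(σ) γ(τ)` says exactly that `c_{i+1,j}(στ)` equals this sum, which is the
defining-system relation for `(i+1, j)`.
-/

open Finset

section DwyerMatrix

variable {R : Type*} [CommRing R]

-- Indices are 0-based, so the entry `(i, j)` carries the paper's `c_{i+1,j}`.
def dwyerEntry (a : ℕ → ℕ → R) (i j : ℕ) : R :=
  if i < j then (-1 : R) ^ (j - i) * a (i + 1) j else if i = j then 1 else 0

def dwyerMul (a b : ℕ → ℕ → R) (i j : ℕ) : R :=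
  a i j + b i j + ∑ r ∈ Ico i j, a i r * b (r + 1) j

theorem dwyerEntry_of_lt (a : ℕ → ℕ → R) {i j : ℕ} (h : i < j) :
    dwyerEntry a i j = (-1 : R) ^ (j - i) * a (i + 1) j :=
  if_pos h

@[simp]
theorem dwyerEntry_self (a : ℕ → ℕ → R) (i : ℕ) : dwyerEntry a i i = 1 := by
  simp [dwyerEntry]

theorem dwyerEntry_of_gt (a : ℕ → ℕ → R) {i j : ℕ} (h : j < i) : dwyerEntry a i j = 0 := by
  simp [dwyerEntry, h.not_gt, h.ne']

theorem sum_dwyerEntry_mul_dwyerEntry (a b : ℕ → ℕ → R) {i j m : ℕ} (hj : j < m) :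
    ∑ k ∈ range m, dwyerEntry a i k * dwyerEntry b k j = dwyerEntry (dwyerMul a b) i j := by
  have hsub : Icc i j ⊆ range m := fun k hk => by
    simp only [mem_Icc, mem_range] at hk ⊢; omega
  have hvanish : ∀ k ∈ range m, k ∉ Icc i j → dwyerEntry a i k * dwyerEntry b k j = 0 := by
    intro k _ hk
    rcases not_and_or.mp (mem_Icc.not.mp hk) with hk | hk
    · rw [dwyerEntry_of_gt a (not_le.mp hk), zero_mul]
    · rw [dwyerEntry_of_gt b (not_le.mp hk), mul_zero]
  rw [← sum_subset hsub hvanish]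
  rcases lt_trichotomy i j with hij | rfl | hij
  · have hmid : ∑ k ∈ Ico (i + 1) j, dwyerEntry a i k * dwyerEntry b k j =
        (-1 : R) ^ (j - i) * ∑ r ∈ Ico (i + 1) j, a (i + 1) r * b (r + 1) j := by
      rw [mul_sum]
      refine sum_congr rfl fun k hk => ?_
      obtain ⟨hik, hkj⟩ := mem_Ico.mp hk
      rw [dwyerEntry_of_lt a (by omega), dwyerEntry_of_lt b hkj,
        show j - i = (k - i) + (j - k) by omega, pow_add]
      ring
    rw [← Ico_add_one_right_eq_Icc, sum_Ico_succ_top (by omega),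
      sum_eq_sum_Ico_succ_bot (by omega), hmid, dwyerEntry_of_lt _ hij, dwyerEntry_of_lt _ hij,
      dwyerEntry_of_lt _ hij, dwyerMul]
    simp only [dwyerEntry_self]
    ring
  · simp
  · rw [Icc_eq_empty_of_lt hij, sum_empty, dwyerEntry_of_gt _ hij]

def dwyerMatrix (n : ℕ) (a : ℕ → ℕ → R) : Matrix (Fin (n + 1)) (Fin (n + 1)) R :=
  Matrix.of fun i j => dwyerEntry a i j

theorem dwyerMatrix_mul (n : ℕ) (a b : ℕ → ℕ → R) :
    dwyerMatrix n a * dwyerMatrix n b = dwyerMatrix n (dwyerMul a b) := by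
  ext i j
  simp only [dwyerMatrix, Matrix.mul_apply, Matrix.of_apply]
  rw [Fin.sum_univ_eq_sum_range (fun k => dwyerEntry a i k * dwyerEntry b k j),
    sum_dwyerEntry_mul_dwyerEntry a b j.isLt]

theorem dwyerMatrix_eq_dwyerMatrix_iff (n : ℕ) (a b : ℕ → ℕ → R) :
    dwyerMatrix n a = dwyerMatrix n b ↔ ∀ i j, 1 ≤ i → i ≤ j → j ≤ n → a i j = b i j := by
  constructor
  · intro h i j hi hij hjn
    have hE := congrFun₂ h ⟨i - 1, by omega⟩ ⟨j, by omega⟩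
    simp only [dwyerMatrix, Matrix.of_apply] at hE
    rw [dwyerEntry_of_lt a (by omega), dwyerEntry_of_lt b (by omega),
      Nat.sub_add_cancel hi] at hE
    exact (isUnit_neg_one.pow _).mul_left_cancel hE
  · intro h
    ext i j
    simp only [dwyerMatrix, Matrix.of_apply]
    rcases lt_trichotomy (i : ℕ) j with hij | hij | hij
    · rw [dwyerEntry_of_lt a hij, dwyerEntry_of_lt b hij, h (i + 1) j (by omega) hij (by omega)]
    · rw [hij, dwyerEntry_self, dwyerEntry_self]
    · rw [dwyerEntry_of_gt a hij, dwyerEntry_of_gt b hij]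

end DwyerMatrix

theorem stmt_15_general (G : Type*) [Group G] (R : Type*) [CommRing R] (n : ℕ)
    (c : ℕ → ℕ → G → R) :
    letI γ : G → Matrix (Fin (n + 1)) (Fin (n + 1)) R := fun σ i j =>
      if (i : ℕ) < (j : ℕ) then (-1 : R) ^ ((j : ℕ) - (i : ℕ)) * c ((i : ℕ) + 1) (j : ℕ) σ
      else if i = j then 1 else 0
    (∀ σ τ : G, γ (σ * τ) = γ σ * γ τ) ↔
      (∀ i j : ℕ, 1 ≤ i → i ≤ j → j ≤ n → ∀ σ τ : G,
        c i j σ + c i j τ - c i j (σ * τ) =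
          -∑ r ∈ Finset.Ico i j, c i r σ * c (r + 1) j τ) := by
  have hγ : ∀ σ : G, (fun i j : Fin (n + 1) => if (i : ℕ) < (j : ℕ) then
      (-1 : R) ^ ((j : ℕ) - (i : ℕ)) * c ((i : ℕ) + 1) (j : ℕ) σ else if i = j then 1 else 0) =
      dwyerMatrix n (c · · σ) := by
    intro σ
    ext i j
    simp only [dwyerMatrix, dwyerEntry, Matrix.of_apply, Fin.ext_iff]
  simp only [hγ, dwyerMatrix_mul, dwyerMatrix_eq_dwyerMatrix_iff, dwyerMul]
  constructor
  · intro h i j hi hij hjn σ τ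
    rw [h σ τ i j hi hij hjn]
    ring
  · intro h σ τ i j hi hij hjn
    linear_combination -h i j hi hij hjn σ τ

/-- Dwyer's correspondence, full form.
With the correspondence between full systems of 1-cochains `c_{ij}` (`1 ≤ i ≤ j ≤ n`,
encoded as `c : ℕ → ℕ → G → R`) and matrix-valued maps `γ : G → U_{n+1}(R)`,
`γ(σ)_{ij} = (−1)^{j−i} c_{i,j−1}(σ)` for `i < j` (0-based below: `(−1)^{j−i} c_{i+1,j}`),
the map `γ` is a group homomorphism if and only if `(c_{ij})` is a defining system with
additionally `∂c_{1n} = c̃_{1n}`, i.e.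
`c_{ij}(σ) + c_{ij}(τ) − c_{ij}(στ) = −∑_{r=i}^{j−1} c_{ir}(σ) c_{r+1,j}(τ)`
for all `1 ≤ i ≤ j ≤ n` (including `(i,j) = (1,n)`). -/
theorem stmt_15 (G : Type*) [Group G] (R : Type*) [CommRing R] (n : ℕ) (hn : 2 ≤ n)
    (c : ℕ → ℕ → G → R) :
    letI γ : G → Matrix (Fin (n + 1)) (Fin (n + 1)) R := fun σ i j =>
      if (i : ℕ) < (j : ℕ) then (-1 : R) ^ ((j : ℕ) - (i : ℕ)) * c ((i : ℕ) + 1) (j : ℕ) σ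
      else if i = j then 1 else 0
    (∀ σ τ : G, γ (σ * τ) = γ σ * γ τ) ↔
      (∀ i j : ℕ, 1 ≤ i → i ≤ j → j ≤ n → ∀ σ τ : G,
        c i j σ + c i j τ - c i j (σ * τ) =
          -∑ r ∈ Finset.Ico i j, c i r σ * c (r + 1) j τ) :=
  stmt_15_general G R n c
end

section
/- Let G be a group acting trivially on R = ℤ/m, γ̄: G → Ū_{n+1}(R) a homomorphism corresponding to a defining system (c_{ij}) of inhomogeneous 1-cochains, and let B = R × G with product (r,σ)*(s,τ) = (r + s + (−1)^{n−1} c̃_{1n}(σ,τ), στ). Then the map h: U_{n+1}(R) ×_{Ū_{n+1}(R)} G → B, ((a_{ij}), σ) ↦ (a_{1,n+1}, σ), is a group isomorphism commuting with the projections to G; in particular the fiber product U_{n+1}(R) ×_{Ū_{n+1}(R)} G is the central extension of G by R determined by the 2-cocycle (−1)^{n−1} c̃_{1n}. -/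
/-!
For unitriangular `M`, `N` and `i < j`, `(M * N) i j = M i j + N i j + ∑_{i<k<j} M i k * N k j`.
When `M`, `N` lie over `σ`, `τ`, the signs in `γ̄` turn this sum into
`(-1)^(j-i) ∑_r c_{i+1,r}(σ) c_{r+1,j}(τ)`, so away from the corner the defining-system equation
is exactly the statement that `M * N` lies over `στ`; at the corner, where no equation is imposed,
the same sum is `(-1)^(n-1) c̃_{1n}(σ, τ)`. A point over `σ` is `γ̄(σ)` with its corner entry
replaced by an arbitrary one.
-/

open Finset

namespace Matrix

variable {ι R : Type*} [Fintype ι] [LinearOrder ι] [LocallyFiniteOrder ι]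

theorem BlockTriangular.mul_apply_eq_sum_Icc [NonUnitalNonAssocSemiring R] {M N : Matrix ι ι R}
    (hM : M.BlockTriangular id) (hN : N.BlockTriangular id) (i j : ι) :
    (M * N) i j = ∑ k ∈ Icc i j, M i k * N k j := by
  rw [mul_apply]
  refine (sum_subset (subset_univ _) fun k _ hk => ?_).symm
  by_cases hki : k < i
  · rw [hM hki, zero_mul]
  · rw [hN (show j < k by simp_all), mul_zero]

theorem BlockTriangular.mul_apply_eq_add_add_sum_Ioo [NonAssocSemiring R] {M N : Matrix ι ι R}
    (hM : M.BlockTriangular id) (hN : N.BlockTriangular id) (hM₁ : ∀ i, M i i = 1)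
    (hN₁ : ∀ i, N i i = 1) {i j : ι} (hij : i < j) :
    (M * N) i j = M i j + N i j + ∑ k ∈ Ioo i j, M i k * N k j := by
  rw [hM.mul_apply_eq_sum_Icc hN, ← add_sum_Ioc_eq_sum_Icc hij.le, ← sum_Ioo_add_eq_sum_Ioc hij,
    hM₁, hN₁, one_mul, mul_one]
  abel

end Matrix

section DefiningSystem

variable {R G : Type*} [CommRing R] {n : ℕ}

/-- `γ̄(σ)`, in 0-based indices: the `(i, j)` entry is `(-1)^(j-i) c_{i+1,j}(σ)` above the
diagonal, i.e. `(-1)^(j-i) c_{i,j-1}(σ)` in the paper's 1-based indexing. -/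
def definingSystemMatrix (n : ℕ) (c : ℕ → ℕ → G → R) (σ : G) :
    Matrix (Fin (n + 1)) (Fin (n + 1)) R :=
  fun i j =>
    if (i : ℕ) < (j : ℕ) then (-1 : R) ^ ((j : ℕ) - (i : ℕ)) * c ((i : ℕ) + 1) (j : ℕ) σ
    else if i = j then 1 else 0

def IsDefiningSystem [Mul G] (n : ℕ) (c : ℕ → ℕ → G → R) : Prop :=
  ∀ i j : ℕ, 1 ≤ i → i ≤ j → j ≤ n → ¬(i = 1 ∧ j = n) → ∀ σ τ : G,
    c i j σ + c i j τ - c i j (σ * τ) = -∑ r ∈ Ico i j, c i r σ * c (r + 1) j τ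

/-- The paper's `c̃_{1n}`. -/
def definingSystemCocycle (n : ℕ) (c : ℕ → ℕ → G → R) (σ τ : G) : R :=
  -∑ r ∈ Ico 1 n, c 1 r σ * c (r + 1) n τ

/-- `U_{n+1}(R) ×_{Ū_{n+1}(R)} G`: the corner `(0, n)` is the entry forgotten by `Ū_{n+1}`. -/
def fiberProduct (n : ℕ) (c : ℕ → ℕ → G → R) :
    Set (Matrix (Fin (n + 1)) (Fin (n + 1)) R × G) :=
  {p | (∀ i, p.1 i i = 1) ∧ p.1.BlockTriangular id ∧
    ∀ i j : Fin (n + 1), ¬(i = 0 ∧ j = Fin.last n) → p.1 i j = definingSystemMatrix n c p.2 i j}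

variable {c : ℕ → ℕ → G → R}

theorem definingSystemMatrix_self (σ : G) (i : Fin (n + 1)) :
    definingSystemMatrix n c σ i i = 1 := by
  simp [definingSystemMatrix]

theorem blockTriangular_definingSystemMatrix (σ : G) :
    (definingSystemMatrix n c σ).BlockTriangular id := fun i j (hji : j < i) => by
  simp [definingSystemMatrix, hji.not_gt, hji.ne']

theorem definingSystemMatrix_of_lt (σ : G) {i j : Fin (n + 1)} (hij : i < j) :
    definingSystemMatrix n c σ i j = (-1) ^ ((j : ℕ) - i) * c (i + 1) j σ :=
  if_pos hij

theorem sum_Ioo_definingSystemMatrix_mul (σ τ : G) (i j : Fin (n + 1)) :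
    ∑ k ∈ Ioo i j, definingSystemMatrix n c σ i k * definingSystemMatrix n c τ k j =
      (-1) ^ ((j : ℕ) - i) * ∑ r ∈ Ico ((i : ℕ) + 1) j, c (i + 1) r σ * c (r + 1) j τ := by
  rw [Ico_add_one_left_eq_Ioo, ← Fin.map_valEmbedding_Ioo, sum_map, mul_sum]
  refine sum_congr rfl fun k hk => ?_
  obtain ⟨hik, hkj⟩ := mem_Ioo.1 hk
  rw [definingSystemMatrix_of_lt σ hik, definingSystemMatrix_of_lt τ hkj,
    show (j : ℕ) - i = (k - i) + (j - k) by omega, pow_add]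
  simp only [Fin.valEmbedding_apply]
  ring

theorem mul_apply_of_mem_fiberProduct {p q : Matrix (Fin (n + 1)) (Fin (n + 1)) R × G}
    (hp : p ∈ fiberProduct n c) (hq : q ∈ fiberProduct n c) {i j : Fin (n + 1)} (hij : i < j) :
    (p.1 * q.1) i j = p.1 i j + q.1 i j +
      (-1) ^ ((j : ℕ) - i) * ∑ r ∈ Ico ((i : ℕ) + 1) j, c (i + 1) r p.2 * c (r + 1) j q.2 := by
  obtain ⟨hp₁, hp₀, hpγ⟩ := hp
  obtain ⟨hq₁, hq₀, hqγ⟩ := hq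
  rw [hp₀.mul_apply_eq_add_add_sum_Ioo hq₀ hp₁ hq₁ hij, ← sum_Ioo_definingSystemMatrix_mul]
  congr 1
  refine sum_congr rfl fun k hk => ?_
  obtain ⟨hik, hkj⟩ := mem_Ioo.1 hk
  rw [hpγ i k fun h => (Fin.le_last j).not_gt (h.2 ▸ hkj),
    hqγ k j fun h => (Fin.zero_le i).not_gt (h.1 ▸ hik)]

theorem mul_mem_fiberProduct [Mul G] (hc : IsDefiningSystem n c)
    {p q : Matrix (Fin (n + 1)) (Fin (n + 1)) R × G}
    (hp : p ∈ fiberProduct n c) (hq : q ∈ fiberProduct n c) :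
    (p.1 * q.1, p.2 * q.2) ∈ fiberProduct n c := by
  have ⟨hp₁, hp₀, hpγ⟩ := hp
  have ⟨hq₁, hq₀, hqγ⟩ := hq
  have h₁ : ∀ i, (p.1 * q.1) i i = 1 := fun i => by
    rw [hp₀.mul_apply_eq_sum_Icc hq₀, Icc_self, sum_singleton, hp₁, hq₁, mul_one]
  have h₀ : (p.1 * q.1).BlockTriangular id := hp₀.mul hq₀
  refine ⟨h₁, h₀, fun i j hij => ?_⟩
  dsimp only
  rcases lt_trichotomy i j with hlt | rfl | hgt
  · have hc' := hc (i + 1) j (by omega) hlt j.is_le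
      (fun h => hij ⟨Fin.ext (by rw [Fin.val_zero]; omega), Fin.ext (by rw [Fin.val_last]; omega)⟩)
      p.2 q.2
    rw [mul_apply_of_mem_fiberProduct hp hq hlt, hpγ i j hij, hqγ i j hij]
    simp only [definingSystemMatrix_of_lt _ hlt]
    linear_combination (-1 : R) ^ ((j : ℕ) - i) * hc'
  · rw [h₁, definingSystemMatrix_self]
  · rw [h₀ hgt, blockTriangular_definingSystemMatrix _ hgt]

theorem mul_apply_zero_last_of_mem_fiberProduct (hn : n ≠ 0)
    {p q : Matrix (Fin (n + 1)) (Fin (n + 1)) R × G}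
    (hp : p ∈ fiberProduct n c) (hq : q ∈ fiberProduct n c) :
    (p.1 * q.1) 0 (Fin.last n) = p.1 0 (Fin.last n) + q.1 0 (Fin.last n) +
      (-1) ^ (n - 1) * definingSystemCocycle n c p.2 q.2 := by
  have : NeZero n := ⟨hn⟩
  rw [mul_apply_of_mem_fiberProduct hp hq Fin.last_pos', definingSystemCocycle]
  simp only [Fin.val_zero, Fin.val_last, zero_add, Nat.sub_zero]
  rw [← pow_sub_one_mul hn]
  ring

theorem existsUnique_mem_fiberProduct (hn : n ≠ 0) (σ : G) (x : R) :
    ∃! M : Matrix (Fin (n + 1)) (Fin (n + 1)) R,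
      (M, σ) ∈ fiberProduct n c ∧ M 0 (Fin.last n) = x := by
  have : NeZero n := ⟨hn⟩
  refine ⟨fun i j => if i = 0 ∧ j = Fin.last n then x else definingSystemMatrix n c σ i j,
    ⟨⟨fun i => ?_, fun i j (hji : j < i) => ?_, fun i j h => if_neg h⟩, if_pos ⟨rfl, rfl⟩⟩, ?_⟩
  · have : ¬(i = 0 ∧ i = Fin.last n) := fun h => Fin.last_pos'.ne (h.1 ▸ h.2)
    simp only [this, if_false, definingSystemMatrix_self]
  · have : i ≠ 0 := ((Fin.zero_le j).trans_lt hji).ne'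
    simp only [this, false_and, if_false, blockTriangular_definingSystemMatrix σ hji]
  · rintro M ⟨⟨-, -, hγ⟩, hx⟩
    ext i j
    by_cases h : i = 0 ∧ j = Fin.last n
    · rw [if_pos h, h.1, h.2, hx]
    · rw [if_neg h]
      exact hγ i j h

end DefiningSystem

theorem stmt_19_general (G : Type*) [Group G] (m n : ℕ) (hn : 2 ≤ n)
    (c : ℕ → ℕ → G → ZMod m)
    (hc : ∀ i j : ℕ, 1 ≤ i → i ≤ j → j ≤ n → ¬(i = 1 ∧ j = n) → ∀ σ τ : G,
      c i j σ + c i j τ - c i j (σ * τ) =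
        -∑ r ∈ Finset.Ico i j, c i r σ * c (r + 1) j τ) :
    letI ctilde : G → G → ZMod m := fun σ τ =>
      -∑ r ∈ Finset.Ico 1 n, c 1 r σ * c (r + 1) n τ
    letI γ : G → Matrix (Fin (n + 1)) (Fin (n + 1)) (ZMod m) := fun σ i j =>
      if (i : ℕ) < (j : ℕ) then (-1 : ZMod m) ^ ((j : ℕ) - (i : ℕ)) * c ((i : ℕ) + 1) (j : ℕ) σ
      else if i = j then 1 else 0
    letI Fib : Set (Matrix (Fin (n + 1)) (Fin (n + 1)) (ZMod m) × G) :=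
      {p | (∀ i, p.1 i i = 1) ∧
        (∀ i j : Fin (n + 1), (j : ℕ) < (i : ℕ) → p.1 i j = 0) ∧
        ∀ i j : Fin (n + 1), ¬(i = 0 ∧ j = Fin.last n) → p.1 i j = γ p.2 i j}
    -- the fiber product is closed under multiplication (so it is a group, and the
    -- projection to `G` is a homomorphism)
    (∀ p q : Matrix (Fin (n + 1)) (Fin (n + 1)) (ZMod m) × G,
      p ∈ Fib → q ∈ Fib → (p.1 * q.1, p.2 * q.2) ∈ Fib) ∧
    -- `h` is multiplicative for the `B`-product `(r,σ)*(s,τ) = (r+s+(−1)^{n−1}c̃(σ,τ), στ)`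
    (∀ p q : Matrix (Fin (n + 1)) (Fin (n + 1)) (ZMod m) × G,
      p ∈ Fib → q ∈ Fib →
        (p.1 * q.1) 0 (Fin.last n) =
          p.1 0 (Fin.last n) + q.1 0 (Fin.last n) +
            (-1 : ZMod m) ^ (n - 1) * ctilde p.2 q.2) ∧
    -- `h` is bijective (commuting with the projections to `G`)
    (∀ (σ : G) (x : ZMod m),
      ∃! M : Matrix (Fin (n + 1)) (Fin (n + 1)) (ZMod m),
        (M, σ) ∈ Fib ∧ M 0 (Fin.last n) = x) := by
  have hn₀ : n ≠ 0 := by omega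
  exact ⟨fun _ _ hp hq => mul_mem_fiberProduct hc hp hq,
    fun _ _ hp hq => mul_apply_zero_last_of_mem_fiberProduct hn₀ hp hq,
    existsUnique_mem_fiberProduct hn₀⟩

/-- Dwyer: central extension attached to a Massey product.
Let `G` be a group acting trivially on `R = ℤ/m`, and let `c : ℕ → ℕ → G → ℤ/m`
(1-based indexing, `1 ≤ i ≤ j ≤ n`) be a defining system of inhomogeneous 1-cochains:
`c_{ij}(σ) + c_{ij}(τ) − c_{ij}(στ) = −∑_{r=i}^{j−1} c_{ir}(σ) c_{r+1,j}(τ)` for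
`(i,j) ≠ (1,n)`.  Let `γ̄ : G → Ū_{n+1}(ℤ/m)` be the corresponding map,
`γ̄(σ)_{ij} = (−1)^{j−i} c_{i,j−1}(σ)` (0-based: `(−1)^{j−i} c_{i+1,j}(σ)`), and let
`B = ℤ/m × G` carry the product
`(r,σ) * (s,τ) = (r + s + (−1)^{n−1} c̃_{1n}(σ,τ), στ)`.  Then the map
`h : U_{n+1}(ℤ/m) ×_{Ū_{n+1}(ℤ/m)} G → B`, `((a_{ij}), σ) ↦ (a_{1,n+1}, σ)`, is a group
isomorphism commuting with the projections to `G`; in particular the fiber product is the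
central extension of `G` by `ℤ/m` determined by the 2-cocycle `(−1)^{n−1} c̃_{1n}`.
Concretely: the fiber product is closed under (componentwise) multiplication, the
`(1,n+1)`-entry of a product is given by the `B`-product formula, and `h` is bijective. -/
theorem stmt_19 (G : Type*) [Group G] (m n : ℕ) (hm : 2 ≤ m) (hn : 2 ≤ n)
    (c : ℕ → ℕ → G → ZMod m)
    (hc : ∀ i j : ℕ, 1 ≤ i → i ≤ j → j ≤ n → ¬(i = 1 ∧ j = n) → ∀ σ τ : G,
      c i j σ + c i j τ - c i j (σ * τ) =
        -∑ r ∈ Finset.Ico i j, c i r σ * c (r + 1) j τ) :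
    letI ctilde : G → G → ZMod m := fun σ τ =>
      -∑ r ∈ Finset.Ico 1 n, c 1 r σ * c (r + 1) n τ
    letI γ : G → Matrix (Fin (n + 1)) (Fin (n + 1)) (ZMod m) := fun σ i j =>
      if (i : ℕ) < (j : ℕ) then (-1 : ZMod m) ^ ((j : ℕ) - (i : ℕ)) * c ((i : ℕ) + 1) (j : ℕ) σ
      else if i = j then 1 else 0
    letI Fib : Set (Matrix (Fin (n + 1)) (Fin (n + 1)) (ZMod m) × G) :=
      {p | (∀ i, p.1 i i = 1) ∧
        (∀ i j : Fin (n + 1), (j : ℕ) < (i : ℕ) → p.1 i j = 0) ∧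
        ∀ i j : Fin (n + 1), ¬(i = 0 ∧ j = Fin.last n) → p.1 i j = γ p.2 i j}
    -- the fiber product is closed under multiplication (so it is a group, and the
    -- projection to `G` is a homomorphism)
    (∀ p q : Matrix (Fin (n + 1)) (Fin (n + 1)) (ZMod m) × G,
      p ∈ Fib → q ∈ Fib → (p.1 * q.1, p.2 * q.2) ∈ Fib) ∧
    -- `h` is multiplicative for the `B`-product `(r,σ)*(s,τ) = (r+s+(−1)^{n−1}c̃(σ,τ), στ)`
    (∀ p q : Matrix (Fin (n + 1)) (Fin (n + 1)) (ZMod m) × G,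
      p ∈ Fib → q ∈ Fib →
        (p.1 * q.1) 0 (Fin.last n) =
          p.1 0 (Fin.last n) + q.1 0 (Fin.last n) +
            (-1 : ZMod m) ^ (n - 1) * ctilde p.2 q.2) ∧
    -- `h` is bijective (commuting with the projections to `G`)
    (∀ (σ : G) (x : ZMod m),
      ∃! M : Matrix (Fin (n + 1)) (Fin (n + 1)) (ZMod m),
        (M, σ) ∈ Fib ∧ M 0 (Fin.last n) = x) :=
  stmt_19_general G m n hn c hc
end
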